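/- Let k be a field, Q = (V, A, h, t) a quiver, θ ∈ ℤ^V (regarded in k via ℤ → k), and W = ((W_v), (φ_a)_{a∈A}) a finite-dimensional k-representation of Q. Then there exists a tuple (φ_{a*})_{a∈A} with φ_{a*} : W_{h(a)} → W_{t(a)} such that ((W_v), (φ_a), (φ_{a*})) is a representation of the doubled quiver Q̄ satisfying the relations R_θ, if and only if Σ_{v∈V} θ_v · tr(f_v) = 0 in k for every endomorphism f = (f_v)_{v∈V} ∈ End_Q(W). -/

import Mathlib

/-!
The left-hand side of `R_θ` is a linear function `μ` of the reverse arrows `ψ`. With respect to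
the trace pairing `⟨f, e⟩ = Σ_v tr (f_v ∘ e_v)` on `⨁_v End(W_v)`, which is nondegenerate, cyclicity
of the trace gives `⟨f, μ ψ⟩ = Σ_a tr ((f_{h a} ∘ φ_a - φ_a ∘ f_{t a}) ∘ ψ_a)`. So `f` annihilates
the range of `μ` exactly when `f ∈ End_Q(W)`, and `θ · id` lies in that range iff it is orthogonal
to `End_Q(W)`, where `⟨f, θ · id⟩ = Σ_v θ_v tr f_v`.
-/

open LinearMap Finset

theorem LinearMap.eq_zero_of_forall_trace_comp_eq_zero {k X Y : Type*} [Field k]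
    [AddCommGroup X] [Module k X] [AddCommGroup Y] [Module k Y] [FiniteDimensional k Y]
    (χ : X →ₗ[k] Y) (h : ∀ ψ : Y →ₗ[k] X, trace k Y (χ ∘ₗ ψ) = 0) : χ = 0 := by
  ext x
  rw [zero_apply, ← Module.forall_dual_apply_eq_zero_iff k]
  intro ξ
  have hcomp : χ ∘ₗ ξ.smulRight x = ξ.smulRight (χ x) := by ext; simp
  simpa [hcomp] using h (ξ.smulRight x)

theorem LinearMap.mem_range_iff_of_surjective_pairing {k E F H : Type*} [Field k]
    [AddCommGroup E] [Module k E] [AddCommGroup F] [Module k F] [AddCommGroup H] [Module k H]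
    (B : F →ₗ[k] Module.Dual k E) (hB : Function.Surjective B) (T : H →ₗ[k] E) (η : E) :
    η ∈ range T ↔ ∀ f, (∀ ψ, B f (T ψ) = 0) → B f η = 0 := by
  rw [← Subspace.forall_mem_dualAnnihilator_apply_eq_zero_iff, hB.forall]
  simp only [Submodule.mem_dualAnnihilator, LinearMap.mem_range, forall_exists_index,
    forall_apply_eq_imp_iff]

section TracePairing

variable {k V : Type*} [Field k] [Fintype V] {W : V → Type*}
  [∀ v, AddCommGroup (W v)] [∀ v, Module k (W v)]

variable (k W) in
noncomputable def tracePairing :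
    (∀ v, W v →ₗ[k] W v) →ₗ[k] Module.Dual k (∀ v, W v →ₗ[k] W v) :=
  ∑ v, ((LinearMap.mul k (W v →ₗ[k] W v)).compr₂ (trace k (W v))).compl₁₂ (proj v) (proj v)

theorem tracePairing_apply (f e : ∀ v, W v →ₗ[k] W v) :
    tracePairing k W f e = ∑ v, trace k (W v) (f v ∘ₗ e v) := by
  simp only [tracePairing, LinearMap.sum_apply, compl₁₂_apply, compr₂_apply, proj_apply,
    mul_apply', Module.End.mul_eq_comp]

theorem tracePairing_smul_id (f : ∀ v, W v →ₗ[k] W v) (c : V → k) :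
    tracePairing k W f (fun v => c v • LinearMap.id) = ∑ v, c v * trace k (W v) (f v) := by
  simp only [tracePairing_apply, comp_smul, comp_id, map_smul, smul_eq_mul]

variable [DecidableEq V]

theorem tracePairing_single (f : ∀ v, W v →ₗ[k] W v) (i : V) (x : W i →ₗ[k] W i) :
    tracePairing k W f (Pi.single i x) = trace k (W i) (f i ∘ₗ x) := by
  rw [tracePairing_apply, Fintype.sum_eq_single i fun v hv => by simp [Pi.single_eq_of_ne hv]]
  simp

theorem tracePairing_injective [∀ v, FiniteDimensional k (W v)] :
    Function.Injective (tracePairing k W) := by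
  rw [← ker_eq_bot, ker_eq_bot']
  intro f hf
  funext v
  refine eq_zero_of_forall_trace_comp_eq_zero (f v) fun ψ => ?_
  rw [← tracePairing_single, hf, LinearMap.zero_apply]

theorem tracePairing_surjective [∀ v, FiniteDimensional k (W v)] :
    Function.Surjective (tracePairing k W) :=
  (injective_iff_surjective_of_finrank_eq_finrank Subspace.dual_finrank_eq.symm).mp
    tracePairing_injective

end TracePairing

section MomentMap

variable {k V A : Type*} [Field k] [Fintype A] [DecidableEq V] {W : V → Type*}
  [∀ v, AddCommGroup (W v)] [∀ v, Module k (W v)] {hd tl : A → V}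

noncomputable def momentMap (φ : ∀ a, W (tl a) →ₗ[k] W (hd a)) :
    (∀ a, W (hd a) →ₗ[k] W (tl a)) →ₗ[k] (∀ v, W v →ₗ[k] W v) where
  toFun ψ := ∑ a, Pi.single (hd a) (φ a ∘ₗ ψ a) - ∑ a, Pi.single (tl a) (ψ a ∘ₗ φ a)
  map_add' ψ ψ' := by
    simp only [Pi.add_apply, comp_add, add_comp, Pi.single_add, sum_add_distrib]
    abel
  map_smul' c ψ := by
    simp only [Pi.smul_apply, comp_smul, smul_comp, Pi.single_smul, ← smul_sum, smul_sub,
      RingHom.id_apply]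

theorem momentMap_apply (φ : ∀ a, W (tl a) →ₗ[k] W (hd a)) (ψ : ∀ a, W (hd a) →ₗ[k] W (tl a)) :
    momentMap φ ψ = ∑ a, Pi.single (hd a) (φ a ∘ₗ ψ a) - ∑ a, Pi.single (tl a) (ψ a ∘ₗ φ a) :=
  rfl

variable [Fintype V]

theorem tracePairing_momentMap [∀ v, FiniteDimensional k (W v)]
    (φ : ∀ a, W (tl a) →ₗ[k] W (hd a)) (f : ∀ v, W v →ₗ[k] W v) (ψ : ∀ a, W (hd a) →ₗ[k] W (tl a)) :
    tracePairing k W f (momentMap φ ψ) =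
      ∑ a, trace k (W (hd a)) ((f (hd a) ∘ₗ φ a - φ a ∘ₗ f (tl a)) ∘ₗ ψ a) := by
  simp only [momentMap_apply, map_sub, map_sum, tracePairing_single, ← sum_sub_distrib, sub_comp]
  refine sum_congr rfl fun a _ => ?_
  have hcycle := trace_comp_comm' (φ a) (f (tl a) ∘ₗ ψ a)
  simp only [comp_assoc] at hcycle ⊢
  rw [hcycle]

theorem forall_tracePairing_momentMap_eq_zero_iff [∀ v, FiniteDimensional k (W v)]
    (φ : ∀ a, W (tl a) →ₗ[k] W (hd a)) (f : ∀ v, W v →ₗ[k] W v) :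
    (∀ ψ, tracePairing k W f (momentMap φ ψ) = 0) ↔
      ∀ a, f (hd a) ∘ₗ φ a = φ a ∘ₗ f (tl a) := by
  classical
  simp only [tracePairing_momentMap]
  refine ⟨fun h a => sub_eq_zero.mp <| eq_zero_of_forall_trace_comp_eq_zero _ fun ψ => ?_,
    fun h ψ => sum_eq_zero fun a _ => by rw [h a, sub_self, zero_comp, map_zero]⟩
  have hsingle := h (Pi.single a ψ)
  rwa [Fintype.sum_eq_single a fun b hb => by rw [Pi.single_eq_of_ne hb, comp_zero, map_zero],
    Pi.single_eq_same] at hsingle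

end MomentMap

/-- (Lifting criterion, Crawley-Boevey.) A finite-dimensional
`k`-representation `W = ((W v), (φ a))` of `Q` lifts to a representation
`((W v), (φ a), (ψ a))` of the doubled quiver `Q̄` satisfying the relations `R_θ`
if and only if `Σ_v θ v · tr(f v) = 0` in `k` for every endomorphism `f ∈ End_Q(W)`. -/
theorem stmt_11 (k : Type) [Field k] (V A : Type) [Fintype V] [Fintype A] [DecidableEq V]
    (hd tl : A → V) (θ : V → ℤ)
    (W : V → Type)
    [∀ v, AddCommGroup (W v)] [∀ v, Module k (W v)] [∀ v, FiniteDimensional k (W v)]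
    (φ : ∀ a, W (tl a) →ₗ[k] W (hd a)) :
    (∃ ψ : ∀ a, W (hd a) →ₗ[k] W (tl a), ∀ v,
        (∑ a, Pi.single (M := fun v => W v →ₗ[k] W v) (hd a) ((φ a).comp (ψ a))) v
          - (∑ a, Pi.single (M := fun v => W v →ₗ[k] W v) (tl a) ((ψ a).comp (φ a))) v
        = ((θ v : k)) • (LinearMap.id : W v →ₗ[k] W v)) ↔
    (∀ f : ∀ v, W v →ₗ[k] W v,
      (∀ a, (f (hd a)).comp (φ a) = (φ a).comp (f (tl a))) →
      ∑ v, (θ v : k) * LinearMap.trace k (W v) (f v) = 0) := by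
  trans (fun v => (θ v : k) • LinearMap.id) ∈ range (momentMap φ)
  · simp only [LinearMap.mem_range, funext_iff, momentMap_apply, Pi.sub_apply]
  · simp only [mem_range_iff_of_surjective_pairing _ tracePairing_surjective,
      forall_tracePairing_momentMap_eq_zero_iff, tracePairing_smul_id]
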